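/- Fix λ > 0. Let (α_t)_{t≥0} be a sequence in (0,1) with α_0 ∈ (0,1) such that for each t, α_{t+1} is the unique maximizer of α ↦ log α − λ·(α log(α/α_t) + (1−α) log((1−α)/(1−α_t))) on (0,1). Then (α_t) is strictly increasing and α_t → 1 as t → ∞. -/

import Mathlib

/-!
At the maximizer `b` of `g lam a` on `(0, 1)` the first-order condition reads
`b⁻¹ = lam * (logit b - logit a)`, and `b < 1` turns it into `logit a + lam⁻¹ ≤ logit b`.
So `logit (α t)` grows by at least `lam⁻¹` per step and tends to `∞`, and
`α t = sigmoid (logit (α t))` is strictly increasing with limit `1`.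
-/

open Filter

/-- g(α) = log α − λ·KL(Ber(α)‖Ber(a)). -/
noncomputable def g (lam a : ℝ) : ℝ → ℝ :=
  fun α => Real.log α -
    lam * (α * Real.log (α / a) + (1 - α) * Real.log ((1 - α) / (1 - a)))

open Real Set

noncomputable def logit (x : ℝ) : ℝ := log (x / (1 - x))

lemma sigmoid_logit {x : ℝ} (hx : x ∈ Ioo (0 : ℝ) 1) : sigmoid (logit x) = x := by
  have hx1 : 0 < 1 - x := sub_pos.2 hx.2
  rw [sigmoid_def, logit, exp_neg, exp_log (div_pos hx.1 hx1), inv_div]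
  field_simp [hx.1.ne', hx1.ne']
  ring

lemma hasDerivAt_g (lam : ℝ) {a x : ℝ} (ha : a ∈ Ioo (0 : ℝ) 1) (hx : x ∈ Ioo (0 : ℝ) 1) :
    HasDerivAt (g lam a) (x⁻¹ - lam * (logit x - logit a)) x := by
  have ha0 := ha.1.ne'
  have ha1 := (sub_pos.2 ha.2).ne'
  have hx0 := hx.1.ne'
  have hx1 := (sub_pos.2 hx.2).ne'
  have hsub : HasDerivAt (fun y : ℝ => 1 - y) (-1) x := by
    simpa using (hasDerivAt_id' x).const_sub 1
  have hfirst := (hasDerivAt_id' x).mul (((hasDerivAt_id' x).div_const a).log (div_ne_zero hx0 ha0))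
  have hsecond := hsub.mul ((hsub.div_const (1 - a)).log (div_ne_zero hx1 ha1))
  refine ((hasDerivAt_log hx0).sub ((hfirst.add hsecond).const_mul lam)).congr_deriv ?_
  unfold logit
  rw [log_div hx0 ha0, log_div hx1 ha1, log_div hx0 hx1, log_div ha0 ha1]
  field_simp
  ring

lemma inv_eq_mul_logit_sub_of_isMaxOn {lam a b : ℝ} (ha : a ∈ Ioo (0 : ℝ) 1)
    (hb : b ∈ Ioo (0 : ℝ) 1) (hmax : IsMaxOn (g lam a) (Ioo 0 1) b) :
    b⁻¹ = lam * (logit b - logit a) :=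
  sub_eq_zero.1 <| (hmax.isLocalMax (isOpen_Ioo.mem_nhds hb)).hasDerivAt_eq_zero
    (hasDerivAt_g lam ha hb)

lemma logit_add_inv_le_of_isMaxOn {lam a b : ℝ} (hlam : 0 < lam) (ha : a ∈ Ioo (0 : ℝ) 1)
    (hb : b ∈ Ioo (0 : ℝ) 1) (hmax : IsMaxOn (g lam a) (Ioo 0 1) b) :
    logit a + lam⁻¹ ≤ logit b := by
  have hgap : lam⁻¹ ≤ logit b - logit a := by
    rw [inv_le_iff_one_le_mul₀' hlam, ← inv_eq_mul_logit_sub_of_isMaxOn ha hb hmax]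
    exact ((one_lt_inv₀ hb.1).2 hb.2).le
  linarith

section
variable {𝕜 : Type*} [Field 𝕜] [LinearOrder 𝕜] [IsStrictOrderedRing 𝕜] {u : ℕ → 𝕜} {c : 𝕜}

lemma strictMono_of_add_le_succ (hc : 0 < c) (h : ∀ n, u n + c ≤ u (n + 1)) : StrictMono u :=
  strictMono_nat_of_lt_succ fun n => (lt_add_of_pos_right _ hc).trans_le (h n)

lemma add_natCast_mul_le_of_add_le_succ (h : ∀ n, u n + c ≤ u (n + 1)) (n : ℕ) :
    u 0 + n * c ≤ u n := by
  induction n with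
  | zero => simp
  | succ n ih => push_cast; linarith [h n]

lemma tendsto_atTop_of_add_le_succ [Archimedean 𝕜] (hc : 0 < c) (h : ∀ n, u n + c ≤ u (n + 1)) :
    Tendsto u atTop atTop :=
  tendsto_atTop_mono (add_natCast_mul_le_of_add_le_succ h) <|
    tendsto_atTop_add_const_left _ _ (tendsto_natCast_atTop_atTop.atTop_mul_const hc)

end

/-- Iterating the penalized update drives the mass on the good set strictly up to 1. -/
theorem iterates_strictMono_tendsto_one
    (lam : ℝ) (hlam : 0 < lam)
    (α : ℕ → ℝ) (h0 : α 0 ∈ Set.Ioo (0:ℝ) 1)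
    (hmem : ∀ t, α (t + 1) ∈ Set.Ioo (0:ℝ) 1)
    (hrec : ∀ t, ∀ β ∈ Set.Ioo (0:ℝ) 1, g lam (α t) β ≤ g lam (α t) (α (t + 1))) :
    StrictMono α ∧ Tendsto α atTop (nhds 1) := by
  have hα : ∀ t, α t ∈ Ioo (0 : ℝ) 1
    | 0 => h0
    | t + 1 => hmem t
  have hstep : ∀ t, logit (α t) + lam⁻¹ ≤ logit (α (t + 1)) := fun t =>
    logit_add_inv_le_of_isMaxOn hlam (hα t) (hmem t) (hrec t)
  have hα_eq : α = sigmoid ∘ logit ∘ α := funext fun t => (sigmoid_logit (hα t)).symm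
  rw [hα_eq]
  exact ⟨sigmoid_strictMono.comp (strictMono_of_add_le_succ (inv_pos.2 hlam) hstep),
    tendsto_sigmoid_atTop.comp (tendsto_atTop_of_add_le_succ (inv_pos.2 hlam) hstep)⟩
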